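/- arXiv:1301.4643 — 3 statements merged into one kernel-verified Lean document; each statement's English description precedes it below -/
import Mathlib

section
/- Upper bound on the list size (Bound II): For any rank-metric code C of length n ≤ m over F_{q^m} with minimum rank distance d, and any ⌊(d−1)/2⌋ ≤ τ < d, the number of codewords within rank distance τ of any word r ∈ F_{q^m}^n is at most 1 + Σ_{t=⌊(d−1)/2⌋+1}^{τ} [n choose 2t+1−d]_q / [t choose 2t+1−d]_q. -/
/-- The rank of a vector `v ∈ L^n` over the base field `Fq`. -/
noncomputable def vrank (Fq : Type*) [Field Fq] {L : Type*} [Field L] [Algebra Fq L]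
    {n : ℕ} (v : Fin n → L) : ℕ :=
  Module.finrank Fq (Submodule.span Fq (Set.range v))

/-- The Gaussian binomial coefficient `[n choose r]_q` as a rational number. -/
def gaussBinomQ (q n r : ℕ) : ℚ :=
  ∏ i ∈ Finset.range r, ((q : ℚ) ^ n - (q : ℚ) ^ i) / ((q : ℚ) ^ r - (q : ℚ) ^ i)

/-!
The row space of `v ∈ Lⁿ` is a `vrank v`-dimensional subspace of an `n`-dimensional
`𝔽_q`-space, and `rowSpace (u - v) ≤ rowSpace u ⊔ rowSpace v`. Hence at most one codeword lies
at rank distance `≤ ⌊(d-1)/2⌋` from `r`, and for the codewords `c` at distance exactly `t` the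
`t`-dimensional spaces `rowSpace (r - c)` meet pairwise in dimension `≤ 2t - d`. The anticode
bound for such a family gives at most `[n, 2t+1-d]_q / [t, 2t+1-d]_q` of them; sum over `t`.
-/

open Module Submodule

section GaussBinom

variable {q N t k : ℕ}

lemma prod_pow_sub_pow_pos (hq : 1 < q) (hkN : k ≤ N) :
    0 < ∏ i ∈ Finset.range k, ((q : ℚ) ^ N - (q : ℚ) ^ i) :=
  Finset.prod_pos fun _ hi => sub_pos.2 <| pow_lt_pow_right₀ (by exact_mod_cast hq) <|
    (Finset.mem_range.1 hi).trans_le hkN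

lemma gaussBinomQ_eq_div (q N k : ℕ) :
    gaussBinomQ q N k = (∏ i ∈ Finset.range k, ((q : ℚ) ^ N - (q : ℚ) ^ i)) /
      ∏ i ∈ Finset.range k, ((q : ℚ) ^ k - (q : ℚ) ^ i) :=
  Finset.prod_div_distrib ..

lemma gaussBinomQ_pos (hq : 1 < q) (hkN : k ≤ N) : 0 < gaussBinomQ q N k := by
  rw [gaussBinomQ_eq_div]
  exact div_pos (prod_pow_sub_pow_pos hq hkN) (prod_pow_sub_pow_pos hq le_rfl)

lemma gaussBinomQ_div_gaussBinomQ (hq : 1 < q) :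
    gaussBinomQ q N k / gaussBinomQ q t k =
      (∏ i ∈ Finset.range k, ((q : ℚ) ^ N - (q : ℚ) ^ i)) /
        ∏ i ∈ Finset.range k, ((q : ℚ) ^ t - (q : ℚ) ^ i) := by
  rw [gaussBinomQ_eq_div, gaussBinomQ_eq_div,
    div_div_div_cancel_right₀ (prod_pow_sub_pow_pos hq le_rfl).ne']

lemma natCast_prod_pow_sub_pow (hq : 0 < q) (hkN : k ≤ N) :
    ((∏ i : Fin k, (q ^ N - q ^ (i : ℕ)) : ℕ) : ℚ) =
      ∏ i ∈ Finset.range k, ((q : ℚ) ^ N - (q : ℚ) ^ i) := by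
  rw [Fin.prod_univ_eq_prod_range (fun i => q ^ N - q ^ i), Nat.cast_prod]
  refine Finset.prod_congr rfl fun i hi => ?_
  rw [Nat.cast_sub (Nat.pow_le_pow_right hq ((Finset.mem_range.1 hi).le.trans hkN))]
  push_cast
  rfl

end GaussBinom

section Anticode

variable {K V : Type*} [Field K] [Fintype K] [AddCommGroup V] [Module K V] [Finite V]

/-- A linearly independent `k`-tuple spans a `k`-dimensional space, so it lies in at most one
member of a family of subspaces whose pairwise intersections have dimension `< k`; hence the
`k`-tuples inside the members inject into all `k`-tuples of `V`. -/
theorem card_mul_prod_le_prod_of_finrank_inf_lt {ι : Type*} [Finite ι] {t k : ℕ}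
    (hkt : k ≤ t) (htV : t ≤ finrank K V) (S : ι → Submodule K V)
    (hS : ∀ i, finrank K (S i) = t) (hSS : Pairwise fun i j => finrank K ↥(S i ⊓ S j) < k) :
    Nat.card ι * ∏ i : Fin k, (Fintype.card K ^ t - Fintype.card K ^ (i : ℕ)) ≤
      ∏ i : Fin k, (Fintype.card K ^ finrank K V - Fintype.card K ^ (i : ℕ)) := by
  have := Fintype.ofFinite ι
  let F : (Σ i, {f : Fin k → S i // LinearIndependent K f}) →
      {f : Fin k → V // LinearIndependent K f} :=
    fun p => ⟨fun a => (p.2.1 a : V), p.2.2.map' (S p.1).subtype (S p.1).ker_subtype⟩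
  have hF : F.Injective := by
    rintro ⟨i, f, hf⟩ ⟨j, g, hg⟩ hfg
    have hfg' : (fun a => (f a : V)) = fun a => (g a : V) := congrArg Subtype.val hfg
    obtain rfl : i = j := by
      by_contra hij
      have hle : span K (Set.range fun a => (f a : V)) ≤ S i ⊓ S j := by
        rw [span_le]
        rintro _ ⟨a, rfl⟩
        refine ⟨(f a).2, ?_⟩
        rw [hfg']
        exact (g a).2
      have hf' : LinearIndependent K fun a => (f a : V) := hf.map' (S i).subtype (S i).ker_subtype
      have := finrank_mono hle
      rw [finrank_span_eq_card hf', Fintype.card_fin] at this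
      exact (hSS hij).not_ge this
    obtain rfl : f = g := funext fun a => Subtype.ext (congrFun hfg' a)
    rfl
  calc Nat.card ι * ∏ i : Fin k, (Fintype.card K ^ t - Fintype.card K ^ (i : ℕ))
      = ∑ i : ι, Nat.card {f : Fin k → S i // LinearIndependent K f} := by
        simp only [card_linearIndependent ((hS _).symm ▸ hkt), hS, Finset.sum_const,
          Finset.card_univ, Nat.card_eq_fintype_card, smul_eq_mul]
    _ = Nat.card (Σ i, {f : Fin k → S i // LinearIndependent K f}) := Nat.card_sigma.symm
    _ ≤ Nat.card {f : Fin k → V // LinearIndependent K f} := Nat.card_le_card_of_injective F hF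
    _ = ∏ i : Fin k, (Fintype.card K ^ finrank K V - Fintype.card K ^ (i : ℕ)) :=
        card_linearIndependent (hkt.trans htV)

theorem natCard_le_gaussBinomQ_div_of_finrank_inf_lt {ι : Type*} [Finite ι] {t k : ℕ}
    (hkt : k ≤ t) (htV : t ≤ finrank K V) (S : ι → Submodule K V)
    (hS : ∀ i, finrank K (S i) = t) (hSS : Pairwise fun i j => finrank K ↥(S i ⊓ S j) < k) :
    (Nat.card ι : ℚ) ≤
      gaussBinomQ (Fintype.card K) (finrank K V) k / gaussBinomQ (Fintype.card K) t k := by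
  have hq : 1 < Fintype.card K := Fintype.one_lt_card
  rw [gaussBinomQ_div_gaussBinomQ hq, le_div_iff₀ (prod_pow_sub_pow_pos hq hkt),
    ← natCast_prod_pow_sub_pow Fintype.card_pos hkt,
    ← natCast_prod_pow_sub_pow Fintype.card_pos (hkt.trans htV), ← Nat.cast_mul]
  exact_mod_cast card_mul_prod_le_prod_of_finrank_inf_lt hkt htV S hS hSS

end Anticode

lemma ncard_sublevel_le_add_sum_level {α : Type*} (s : Set α) (f : α → ℕ) {e τ : ℕ}
    (heτ : e ≤ τ) :
    {x | x ∈ s ∧ f x ≤ τ}.ncard ≤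
      {x | x ∈ s ∧ f x ≤ e}.ncard + ∑ t ∈ Finset.Icc (e + 1) τ, {x | x ∈ s ∧ f x = t}.ncard := by
  have hsplit : {x | x ∈ s ∧ f x ≤ τ} =
      {x | x ∈ s ∧ f x ≤ e} ∪ ⋃ t ∈ Finset.Icc (e + 1) τ, {x | x ∈ s ∧ f x = t} := by
    ext x
    simp only [Set.mem_ofPred_eq, Set.mem_union, Set.mem_iUnion, Finset.mem_Icc, exists_prop]
    constructor
    · rintro ⟨hx, hfx⟩
      by_cases h : f x ≤ e
      · exact Or.inl ⟨hx, h⟩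
      · exact Or.inr ⟨f x, by omega, hx, rfl⟩
    · rintro (⟨hx, hfx⟩ | ⟨t, ht, hx, rfl⟩) <;> exact ⟨hx, by omega⟩
  rw [hsplit]
  exact (Set.ncard_union_le _ _).trans (add_le_add le_rfl (Finset.set_ncard_biUnion_le _ _))

section RowSpace

variable (K : Type*) {M : Type*} [Field K] [AddCommGroup M] [Module K M] {n : ℕ}

/-- For `M = 𝔽_{q^m}` this is the row space of the `m × n` matrix expanding `v` in a basis,
realised basis-free inside the dual of `Kⁿ`. -/
noncomputable def rowSpace (v : Fin n → M) : Submodule K (Dual K (Fin n → K)) :=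
  LinearMap.range (Fintype.linearCombination K v).dualMap

lemma rowSpace_sub_le (u v : Fin n → M) :
    rowSpace K (u - v) ≤ rowSpace K u ⊔ rowSpace K v := by
  rintro _ ⟨φ, rfl⟩
  have : (Fintype.linearCombination K (u - v)).dualMap φ =
      (Fintype.linearCombination K u).dualMap φ - (Fintype.linearCombination K v).dualMap φ := by
    ext w
    simp [Fintype.linearCombination_apply, smul_sub]
  rw [this]
  exact sub_mem (mem_sup_left ⟨φ, rfl⟩) (mem_sup_right ⟨φ, rfl⟩)

variable {L : Type*} [Field L] [Algebra K L]

lemma finrank_rowSpace (v : Fin n → L) : finrank K (rowSpace K v) = vrank K v := by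
  rw [rowSpace, LinearMap.finrank_range_dualMap_eq_finrank_range,
    Fintype.range_linearCombination, vrank]

lemma vrank_sub_add_finrank_inf_le (u v : Fin n → L) :
    vrank K (u - v) + finrank K ↥(rowSpace K u ⊓ rowSpace K v) ≤ vrank K u + vrank K v := by
  rw [← finrank_rowSpace, ← finrank_rowSpace K u, ← finrank_rowSpace K v,
    ← finrank_sup_add_finrank_inf_eq (rowSpace K u) (rowSpace K v)]
  exact Nat.add_le_add_right (finrank_mono (rowSpace_sub_le K u v)) _

end RowSpace

section ListDecoding

variable {K L : Type*} [Field K] [Field L] [Algebra K L] {n d : ℕ} {C : Set (Fin n → L)}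

lemma ncard_codewords_rank_le_one (hC : ∀ c₁ ∈ C, ∀ c₂ ∈ C, c₁ ≠ c₂ → d ≤ vrank K (c₁ - c₂))
    {e : ℕ} (he : 2 * e < d) (r : Fin n → L) :
    {c | c ∈ C ∧ vrank K (r - c) ≤ e}.ncard ≤ 1 := by
  have hsub : {c | c ∈ C ∧ vrank K (r - c) ≤ e}.Subsingleton := by
    rintro a ⟨haC, ha⟩ b ⟨hbC, hb⟩
    by_contra hab
    have hd := hC a haC b hbC hab
    rw [show a - b = (r - b) - (r - a) by abel] at hd
    have := vrank_sub_add_finrank_inf_le K (r - b) (r - a)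
    omega
  exact (Set.ncard_le_one hsub.finite).2 hsub

theorem ncard_codewords_rank_eq_le [Fintype K]
    (hC : ∀ c₁ ∈ C, ∀ c₂ ∈ C, c₁ ≠ c₂ → d ≤ vrank K (c₁ - c₂)) (hdn : d ≤ n) {t : ℕ}
    (hdt : d ≤ 2 * t) (htd : t < d) (r : Fin n → L) :
    ({c | c ∈ C ∧ vrank K (r - c) = t}.ncard : ℚ) ≤
      gaussBinomQ (Fintype.card K) n (2 * t + 1 - d) /
        gaussBinomQ (Fintype.card K) t (2 * t + 1 - d) := by
  have hq : 1 < Fintype.card K := Fintype.one_lt_card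
  set shell := {c | c ∈ C ∧ vrank K (r - c) = t}
  obtain hfin | hinf := shell.finite_or_infinite
  · have := hfin.to_subtype
    have : Finite (Dual K (Fin n → K)) := Module.finite_of_finite K
    have hdim : finrank K (Dual K (Fin n → K)) = n := by simp
    have key := natCard_le_gaussBinomQ_div_of_finrank_inf_lt (k := 2 * t + 1 - d)
      (by omega) (by rw [hdim]; omega) (fun c : shell => rowSpace K (r - c.1))
      (fun c => (finrank_rowSpace K _).trans c.2.2) ?_
    · rwa [hdim, Nat.card_coe_set_eq] at key
    rintro ⟨c₁, hc₁C, hc₁⟩ ⟨c₂, hc₂C, hc₂⟩ hne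
    have hd := hC c₂ hc₂C c₁ hc₁C fun h => hne (Subtype.ext h.symm)
    rw [show c₂ - c₁ = (r - c₁) - (r - c₂) by abel] at hd
    have := vrank_sub_add_finrank_inf_le K (r - c₁) (r - c₂)
    dsimp only
    omega
  · rw [hinf.ncard, Nat.cast_zero]
    exact div_nonneg (gaussBinomQ_pos hq (by omega)).le (gaussBinomQ_pos hq (by omega)).le

end ListDecoding

theorem list_size_upper_bound_general
    {Fq L : Type*} [Field Fq] [Fintype Fq] [Field L] [Algebra Fq L]
    {q n d τ : ℕ} (hq : q = Fintype.card Fq)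
    (hdn : d ≤ n)
    (C : Set (Fin n → L))
    (hC : ∀ c₁ ∈ C, ∀ c₂ ∈ C, c₁ ≠ c₂ → d ≤ vrank Fq (c₁ - c₂))
    (hτlo : (d - 1) / 2 ≤ τ) (hτhi : τ < d) :
    ∀ r : Fin n → L,
      (Nat.card {c : Fin n → L // c ∈ C ∧ vrank Fq (r - c) ≤ τ} : ℚ) ≤
        1 + ∑ t ∈ Finset.Icc ((d - 1) / 2 + 1) τ,
              gaussBinomQ q n (2 * t + 1 - d) / gaussBinomQ q t (2 * t + 1 - d) := by
  intro r
  subst hq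
  calc (Nat.card {c : Fin n → L // c ∈ C ∧ vrank Fq (r - c) ≤ τ} : ℚ)
      ≤ {c | c ∈ C ∧ vrank Fq (r - c) ≤ (d - 1) / 2}.ncard +
          ∑ t ∈ Finset.Icc ((d - 1) / 2 + 1) τ, ({c | c ∈ C ∧ vrank Fq (r - c) = t}.ncard : ℚ) :=
        mod_cast ncard_sublevel_le_add_sum_level C (fun c => vrank Fq (r - c)) hτlo
    _ ≤ _ := by
        gcongr with t ht
        · exact_mod_cast ncard_codewords_rank_le_one hC (by omega) r
        · rw [Finset.mem_Icc] at ht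
          exact ncard_codewords_rank_eq_le hC hdn (by omega) (by omega) r

/-- Bound II: upper bound on the list size. For any rank-metric code `C ⊆ F_{q^m}^n`
(`n ≤ m`) with minimum rank distance `d`, and any `⌊(d-1)/2⌋ ≤ τ < d`, the number of
codewords within rank distance `τ` of any word `r` is at most
`1 + ∑_{t=⌊(d-1)/2⌋+1}^{τ} [n choose 2t+1-d]_q / [t choose 2t+1-d]_q`. -/
theorem list_size_upper_bound
    {Fq L : Type*} [Field Fq] [Fintype Fq] [Field L] [Algebra Fq L]
    {q m n d τ : ℕ} (hq : q = Fintype.card Fq) (hm : Module.finrank Fq L = m)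
    (hnm : n ≤ m) (hdn : d ≤ n)
    (C : Set (Fin n → L))
    (hC : ∀ c₁ ∈ C, ∀ c₂ ∈ C, c₁ ≠ c₂ → d ≤ vrank Fq (c₁ - c₂))
    (hτlo : (d - 1) / 2 ≤ τ) (hτhi : τ < d) :
    ∀ r : Fin n → L,
      (Nat.card {c : Fin n → L // c ∈ C ∧ vrank Fq (r - c) ≤ τ} : ℚ) ≤
        1 + ∑ t ∈ Finset.Icc ((d - 1) / 2 + 1) τ,
              gaussBinomQ q n (2 * t + 1 - d) / gaussBinomQ q t (2 * t + 1 - d) :=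
  list_size_upper_bound_general hq hdn C hC hτlo hτhi
end

section
/- Lower bound on the worst-case list size of rank-metric codes (Bound III): Let ⌊(d−1)/2⌋ + 1 ≤ τ < d ≤ n ≤ m and τ ≤ n − τ. Then there exists a (possibly nonlinear) rank-metric code C ⊆ F_{q^m}^n with minimum rank distance at least d and a word r ∈ F_{q^m}^n such that the number of codewords of C within rank distance τ of r is at least q^{(n−τ)(τ−⌊(d−1)/2⌋)}. -/
/-!
Lift a Gabidulin code to words of rank `τ`. Let `N = n - τ`, `s = τ - ⌊(d-1)/2⌋`,
`K = 𝔽_{q^N}`, `U ≤ K` a `τ`-dimensional `𝔽_q`-subspace with a projection `π : K → U`, and for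
`c ∈ K^s` let `ev_c x = ∑ c_i x^{q^i}`. The endomorphism of `U × K` with block matrix
`[1; ev_c] [1, π ev_c]` has rank `τ`, while the difference of two of them has rank at least the
sum of the ranks of its off-diagonal blocks `π ev_{c-c'}` and `ev_{c-c'}|_U`. Each of these is at
least `τ - s + 1`, because a nonzero linearized polynomial of `q`-degree `< s` has at most
`q^{s-1}` roots, so its kernel has dimension `< s`. Composing with an embedding
`U × K → 𝔽_{q^m}` (possible as `n ≤ m`) and evaluating at a basis of `U × K` turns the `q^{Ns}`
lifts into words of rank `τ`, i.e. in the ball of radius `τ` around `0`, at pairwise rank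
distance `≥ 2⌊(d-1)/2⌋ + 2 ≥ d`.
-/

open Module LinearMap Submodule

section RankNullity

variable {F V W Z : Type*} [Field F] [AddCommGroup V] [Module F V] [AddCommGroup W] [Module F W]
  [AddCommGroup Z] [Module F Z]

theorem Submodule.finrank_map_add_finrank_inf_ker [FiniteDimensional F V] (f : V →ₗ[F] W)
    (S : Submodule F V) : finrank F (S.map f) + finrank F ↥(S ⊓ ker f) = finrank F S := by
  have := (f.domRestrict S).finrank_range_add_finrank_ker
  rwa [range_domRestrict, ker_domRestrict, ← finrank_map_subtype_eq, map_comap_subtype] at this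

theorem LinearMap.finrank_range_le_finrank_range_comp_add_finrank_ker [FiniteDimensional F W]
    (f : W →ₗ[F] Z) (g : V →ₗ[F] W) :
    finrank F (range g) ≤ finrank F (range (f ∘ₗ g)) + finrank F (ker f) := by
  rw [range_comp, ← (range g).finrank_map_add_finrank_inf_ker f]
  exact Nat.add_le_add_left (Submodule.finrank_mono inf_le_right) _

theorem Submodule.finrank_add_finrank_map_le [FiniteDimensional F V] (f : V →ₗ[F] W)
    {A S : Submodule F V} (hAS : A ≤ S) (hA : A ≤ ker f) :
    finrank F A + finrank F (S.map f) ≤ finrank F S := by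
  rw [← S.finrank_map_add_finrank_inf_ker f, add_comm]
  exact Nat.add_le_add_left (Submodule.finrank_mono (le_inf hAS hA)) _

end RankNullity

section BlockLift

variable {F U Y : Type*} [Field F] [AddCommGroup U] [Module F U] [AddCommGroup Y] [Module F Y]

/-- The endomorphism of `U × Y` with block matrix `[[1, a], [b, b a]] = [1; b] [1, a]`. -/
def blockLift (a : Y →ₗ[F] U) (b : U →ₗ[F] Y) : U × Y →ₗ[F] U × Y :=
  (LinearMap.id.prod b) ∘ₗ (LinearMap.fst F U Y + a ∘ₗ LinearMap.snd F U Y)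

theorem finrank_range_blockLift [FiniteDimensional F U] (a : Y →ₗ[F] U) (b : U →ₗ[F] Y) :
    finrank F (range (blockLift a b)) = finrank F U := by
  have hsurj : range (LinearMap.fst F U Y + a ∘ₗ LinearMap.snd F U Y) = ⊤ :=
    eq_top_iff.mpr fun u _ => ⟨(u, 0), by simp⟩
  rw [blockLift, range_comp_of_range_eq_top _ hsurj]
  exact finrank_range_of_inj fun u u' h => congrArg Prod.fst h

theorem finrank_range_sub_add_finrank_range_sub_le_finrank_range_blockLift_sub
    [FiniteDimensional F U] [FiniteDimensional F Y] (a a' : Y →ₗ[F] U) (b b' : U →ₗ[F] Y) :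
    finrank F (range (a - a')) + finrank F (range (b - b')) ≤
      finrank F (range (blockLift a b - blockLift a' b')) := by
  set D := blockLift a b - blockLift a' b'
  have hinl : D ∘ₗ inl F U Y = inr F U Y ∘ₗ (b - b') := by
    ext u <;> simp [D, blockLift]
  have hfst : LinearMap.fst F U Y ∘ₗ D = (a - a') ∘ₗ LinearMap.snd F U Y := by
    ext y <;> simp [D, blockLift]
  have hA : finrank F (range (D ∘ₗ inl F U Y)) = finrank F (range (b - b')) := by
    rw [hinl, range_comp]
    exact (equivMapOfInjective _ inr_injective _).finrank_eq.symm
  have hmap : (range D).map (LinearMap.fst F U Y) = range (a - a') := by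
    rw [← range_comp, hfst, range_comp_of_range_eq_top _ range_snd]
  rw [← hA, ← hmap, add_comm]
  refine finrank_add_finrank_map_le _ (range_comp_le_range _ _) ?_
  rintro _ ⟨u, rfl⟩
  simp [hinl]

end BlockLift

section Linearized

open Polynomial FiniteField

section Poly

variable {K : Type*} [Field K] {s : ℕ}

noncomputable def linearizedPoly (q : ℕ) (c : Fin s → K) : K[X] :=
  ∑ i, C (c i) * X ^ q ^ (i : ℕ)

theorem coeff_linearizedPoly {q : ℕ} (hq : 1 < q) (c : Fin s → K) (j : Fin s) :
    (linearizedPoly q c).coeff (q ^ (j : ℕ)) = c j := by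
  simp [linearizedPoly, finsetSum_coeff, (Nat.pow_right_injective hq).eq_iff, Fin.val_inj]

theorem natDegree_linearizedPoly_le {q : ℕ} (hq : 0 < q) (c : Fin s → K) :
    (linearizedPoly q c).natDegree ≤ q ^ (s - 1) := by
  refine natDegree_sum_le_of_forall_le _ _ fun i _ => (natDegree_C_mul_X_pow_le _ _).trans ?_
  exact Nat.pow_le_pow_right hq (by omega)

end Poly

variable (Fq K : Type*) [Field Fq] [Fintype Fq] [Field K] [Algebra Fq K] {s : ℕ}

noncomputable def linearizedEval (c : Fin s → K) : K →ₗ[Fq] K :=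
  ∑ i, c i • (frobeniusAlgHom Fq K ^ (i : ℕ)).toLinearMap

theorem linearizedEval_apply (c : Fin s → K) (x : K) :
    linearizedEval Fq K c x = (linearizedPoly (Fintype.card Fq) c).eval x := by
  simp [linearizedEval, linearizedPoly, coe_frobeniusAlgHom, pow_iterate, eval_finsetSum]

theorem linearizedEval_sub (c c' : Fin s → K) :
    linearizedEval Fq K (c - c') = linearizedEval Fq K c - linearizedEval Fq K c' := by
  ext x
  simp [linearizedEval_apply, linearizedPoly, eval_finsetSum, sub_mul]

theorem finrank_ker_linearizedEval_lt [FiniteDimensional Fq K] {c : Fin s → K} (hc : c ≠ 0) :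
    finrank Fq (ker (linearizedEval Fq K c)) < s := by
  classical
  have hq := Fintype.one_lt_card (α := Fq)
  have : Finite K := Module.finite_of_finite Fq
  have : Fintype K := Fintype.ofFinite K
  obtain ⟨j, hj⟩ := Function.ne_iff.mp hc
  have hP : linearizedPoly (Fintype.card Fq) c ≠ 0 := fun h =>
    hj (by rw [← coeff_linearizedPoly hq c j, h, coeff_zero]; rfl)
  have hroots : (ker (linearizedEval Fq K c) : Set K).toFinset.val ⊆
      (linearizedPoly (Fintype.card Fq) c).roots := by
    intro x hx
    simp_all [mem_roots hP, linearizedEval_apply]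
  have hcard : Nat.card (ker (linearizedEval Fq K c)) ≤ Fintype.card Fq ^ (s - 1) := by
    rw [← SetLike.coe_sort_coe, Nat.card_eq_card_toFinset]
    exact (card_le_degree_of_subset_roots hroots).trans (natDegree_linearizedPoly_le (by omega) c)
  rw [Module.natCard_eq_pow_finrank (K := Fq), Nat.card_eq_fintype_card,
    Nat.pow_le_pow_iff_right hq] at hcard
  have := j.pos
  omega

end Linearized

section GabidulinLift

variable {Fq K : Type*} [Field Fq] [Fintype Fq] [Field K] [Algebra Fq K] {U W : Submodule Fq K}
  {s : ℕ}

noncomputable def gabidulinLift (hUW : IsCompl U W) (c : Fin s → K) : U × K →ₗ[Fq] U × K :=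
  blockLift (U.projectionOnto W hUW ∘ₗ linearizedEval Fq K c) (linearizedEval Fq K c ∘ₗ U.subtype)

variable [FiniteDimensional Fq K]

theorem finrank_lt_finrank_range_linearizedEval_comp_subtype_add (U : Submodule Fq K)
    {c : Fin s → K} (hc : c ≠ 0) :
    finrank Fq U < finrank Fq (range (linearizedEval Fq K c ∘ₗ U.subtype)) + s := by
  have := finrank_range_le_finrank_range_comp_add_finrank_ker (linearizedEval Fq K c) U.subtype
  rw [range_subtype] at this
  have := finrank_ker_linearizedEval_lt Fq K hc
  omega

theorem finrank_lt_finrank_range_projectionOnto_comp_linearizedEval_add (hUW : IsCompl U W)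
    {c : Fin s → K} (hc : c ≠ 0) :
    finrank Fq U < finrank Fq (range (U.projectionOnto W hUW ∘ₗ linearizedEval Fq K c)) + s := by
  have := finrank_range_le_finrank_range_comp_add_finrank_ker (U.projectionOnto W hUW)
    (linearizedEval Fq K c)
  rw [ker_projectionOnto] at this
  have := (linearizedEval Fq K c).finrank_range_add_finrank_ker
  have := Submodule.finrank_add_eq_of_isCompl hUW
  have := finrank_ker_linearizedEval_lt Fq K hc
  omega

theorem finrank_range_gabidulinLift (hUW : IsCompl U W) (c : Fin s → K) :
    finrank Fq (range (gabidulinLift hUW c)) = finrank Fq U :=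
  finrank_range_blockLift _ _

theorem two_mul_finrank_add_one_le_finrank_range_gabidulinLift_sub_add (hUW : IsCompl U W)
    {c c' : Fin s → K} (hcc' : c ≠ c') :
    2 * (finrank Fq U + 1) ≤
      finrank Fq (range (gabidulinLift hUW c - gabidulinLift hUW c')) + 2 * s := by
  have hsum := finrank_range_sub_add_finrank_range_sub_le_finrank_range_blockLift_sub
    (U.projectionOnto W hUW ∘ₗ linearizedEval Fq K c)
    (U.projectionOnto W hUW ∘ₗ linearizedEval Fq K c')
    (linearizedEval Fq K c ∘ₗ U.subtype) (linearizedEval Fq K c' ∘ₗ U.subtype)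
  rw [← comp_sub, ← sub_comp, ← linearizedEval_sub] at hsum
  have hc := sub_ne_zero.mpr hcc'
  have := finrank_lt_finrank_range_linearizedEval_comp_subtype_add U hc
  have := finrank_lt_finrank_range_projectionOnto_comp_linearizedEval_add hUW hc
  unfold gabidulinLift
  omega

end GabidulinLift

theorem exists_linearMap_vrank_eq {F V M L : Type*} [Field F] [AddCommGroup V] [Module F V]
    [FiniteDimensional F V] [AddCommGroup M] [Module F M] [FiniteDimensional F M] [Field L]
    [Algebra F L] {n : ℕ} (hV : finrank F V = n) (hML : finrank F M ≤ finrank F L) :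
    ∃ w : (V →ₗ[F] M) →ₗ[F] (Fin n → L), ∀ φ, vrank F (w φ) = finrank F (range φ) := by
  obtain ⟨f, hf⟩ := exists_linearIndependent_of_le_finrank hML
  let bM := finBasis F M
  let Θ : M →ₗ[F] L := Finsupp.linearCombination F f ∘ₗ bM.repr.toLinearMap
  have hΘ : Function.Injective Θ := fun _ _ h => bM.repr.injective (hf h)
  let bV := finBasisOfFinrankEq F V hV
  refine ⟨{ toFun := fun φ i => Θ (φ (bV i)), map_add' := ?_, map_smul' := ?_ }, fun φ => ?_⟩
  · intro φ ψ; ext; simp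
  · intro a φ; ext; simp
  · change finrank F (span F (Set.range ((Θ ∘ₗ φ) ∘ bV))) = _
    rw [Set.range_comp, span_image, bV.span_eq, Submodule.map_top, range_comp]
    exact (equivMapOfInjective Θ hΘ _).finrank_eq.symm

theorem FiniteField.exists_finrank_eq (Fq : Type*) [Field Fq] [Finite Fq] {N : ℕ} (hN : N ≠ 0) :
    ∃ (K : Type) (_ : Field K) (_ : Algebra Fq K), finrank Fq K = N := by
  have : NeZero N := ⟨hN⟩
  have : Fact (ringChar Fq).Prime := ⟨CharP.char_is_prime Fq _⟩
  exact ⟨Extension Fq (ringChar Fq) N, inferInstance, inferInstance, finrank_extension ..⟩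

theorem list_size_lower_bound_rank_metric_general
    {Fq L : Type*} [Field Fq] [Fintype Fq] [Field L] [Algebra Fq L]
    {q m n d τ : ℕ} (hq : q = Fintype.card Fq) (hm : Module.finrank Fq L = m)
    (hτlo : (d - 1) / 2 + 1 ≤ τ) (hnm : n ≤ m)
    (hτn : τ ≤ n - τ) :
    ∃ C : Set (Fin n → L),
      (∀ c₁ ∈ C, ∀ c₂ ∈ C, c₁ ≠ c₂ → d ≤ vrank Fq (c₁ - c₂)) ∧
      ∃ r : Fin n → L,
        q ^ ((n - τ) * (τ - (d - 1) / 2)) ≤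
          Nat.card {c : Fin n → L // c ∈ C ∧ vrank Fq (r - c) ≤ τ} := by
  set s := τ - (d - 1) / 2
  set N := n - τ
  obtain ⟨K, _, _, hK⟩ := FiniteField.exists_finrank_eq Fq (N := N) (by omega)
  have : FiniteDimensional Fq K := .of_finrank_pos (by omega)
  obtain ⟨u, hu⟩ := exists_linearIndependent_of_le_finrank (R := Fq) (M := K) (n := τ) (by omega)
  obtain ⟨U, hU⟩ : ∃ U : Submodule Fq K, finrank Fq U = τ :=
    ⟨_, (finrank_span_eq_card hu).trans (Fintype.card_fin τ)⟩
  obtain ⟨W, hUW⟩ := U.exists_isCompl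
  have : FiniteDimensional Fq L := .of_finrank_pos (by omega)
  have : Finite L := Module.finite_of_finite Fq
  obtain ⟨w, hw⟩ := exists_linearMap_vrank_eq (F := Fq) (V := U × K) (M := U × K) (L := L)
    (n := n) (by rw [finrank_prod, hU, hK]; omega) (by rw [finrank_prod, hU, hK, hm]; omega)
  let code (c : Fin s → K) := w (gabidulinLift hUW c)
  have hdist (c c' : Fin s → K) (hcc' : c ≠ c') :
      2 * (τ + 1) ≤ vrank Fq (code c - code c') + 2 * s := by
    rw [← map_sub, hw, ← hU]
    exact two_mul_finrank_add_one_le_finrank_range_gabidulinLift_sub_add hUW hcc'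
  have hcode : Function.Injective code := fun c c' h => by
    by_contra hcc'
    have := hdist c c' hcc'
    rw [h, sub_self, ← map_zero w, hw, range_zero, finrank_bot] at this
    omega
  have hball (c : Fin s → K) : vrank Fq (0 - code c) ≤ τ := by
    rw [zero_sub, ← map_neg, hw, range_neg, finrank_range_gabidulinLift, hU]
  refine ⟨Set.range code, ?_, 0, ?_⟩
  · rintro _ ⟨c, rfl⟩ _ ⟨c', rfl⟩ hne
    have := hdist c c' (ne_of_apply_ne code hne)
    omega
  · calc q ^ (N * s) = Nat.card (Fin s → K) := by
          rw [Nat.card_fun, Module.natCard_eq_pow_finrank (K := Fq), hK, hq,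
            Nat.card_eq_fintype_card]
          simp [pow_mul]
      _ ≤ _ := Nat.card_le_card_of_injective (fun c => ⟨code c, ⟨c, rfl⟩, hball c⟩)
          fun c c' h => hcode (congrArg Subtype.val h)

/-- Bound III: lower bound on the worst-case list size of rank-metric codes. For
`⌊(d-1)/2⌋ + 1 ≤ τ < d ≤ n ≤ m` and `τ ≤ n - τ`, there exists a (possibly nonlinear)
rank-metric code `C ⊆ F_{q^m}^n` with minimum rank distance at least `d` and a word `r`
such that the ball of rank radius `τ` around `r` contains at least
`q^{(n-τ)(τ - ⌊(d-1)/2⌋)}` codewords of `C`. -/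
theorem list_size_lower_bound_rank_metric
    {Fq L : Type*} [Field Fq] [Fintype Fq] [Field L] [Algebra Fq L]
    {q m n d τ : ℕ} (hq : q = Fintype.card Fq) (hm : Module.finrank Fq L = m)
    (hτlo : (d - 1) / 2 + 1 ≤ τ) (hτd : τ < d) (hdn : d ≤ n) (hnm : n ≤ m)
    (hτn : τ ≤ n - τ) :
    ∃ C : Set (Fin n → L),
      (∀ c₁ ∈ C, ∀ c₂ ∈ C, c₁ ≠ c₂ → d ≤ vrank Fq (c₁ - c₂)) ∧
      ∃ r : Fin n → L,
        q ^ ((n - τ) * (τ - (d - 1) / 2)) ≤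
          Nat.card {c : Fin n → L // c ∈ C ∧ vrank Fq (r - c) ≤ τ} :=
  list_size_lower_bound_rank_metric_general hq hm hτlo hnm hτn
end

section
/- Weight distribution consequence for MRD codes: if C is a linear MRD code of length n over F_{q^m} (n ≤ m) with minimum rank distance τ (i.e., dimension n−τ+1), then the number of codewords of C of rank exactly τ equals [n choose τ]_q · (q^m − 1). -/
/-- The Gaussian binomial coefficient `[n choose r]_q` (the division is exact). -/
def gaussBinom (q n r : ℕ) : ℕ :=
  (∏ i ∈ Finset.range r, (q ^ n - q ^ i)) / (∏ i ∈ Finset.range r, (q ^ r - q ^ i))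

/-! Write `φ_c : F_q^n → L`, `x ↦ ∑ xᵢ cᵢ`, so that `rank c = n - dim ker φ_c`. Sort the
codewords of rank `τ` by the `(n - τ)`-dimensional subspace `W = ker φ_c`. The codewords `c ∈ C`
with `φ_c` vanishing on a given `W` form an `L`-subspace of dimension exactly one: at least one
because vanishing on `W` is `n - τ` linear conditions on the `(n - τ + 1)`-dimensional `C`, at
most one because also vanishing on a vector outside `W` would force rank `< τ`. Hence every `W`
contributes `q^m - 1` codewords, and by duality there are `[n choose n - τ]_q = [n choose τ]_q`
such `W`. -/

open Module Submodule

theorem Nat.card_eq_card_mul_of_card_fiber {α β : Type*} [Finite α] [Finite β] (f : α → β)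
    {k : ℕ} (h : ∀ b, Nat.card {a // f a = b} = k) : Nat.card α = Nat.card β * k := by
  have := Fintype.ofFinite β
  rw [← Nat.card_congr (Equiv.sigmaFiberEquiv f), Nat.card_sigma,
    Finset.sum_congr rfl fun b _ => h b, Finset.sum_const, smul_eq_mul, Finset.card_univ,
    Nat.card_eq_fintype_card]

theorem Submodule.card_mem_and_ne_zero {R M : Type*} [Ring R] [AddCommGroup M] [Module R M]
    (U : Submodule R M) [Finite U] : Nat.card {x // x ∈ U ∧ x ≠ 0} = Nat.card U - 1 := by
  classical
  have := Fintype.ofFinite U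
  rw [← Nat.card_congr (Equiv.subtypeSubtypeEquivSubtypeInter (· ∈ U) (· ≠ 0)),
    Nat.card_eq_fintype_card, Nat.card_eq_fintype_card]
  simp only [ne_eq, ZeroMemClass.coe_eq_zero]
  rw [Fintype.card_subtype_compl, Fintype.card_subtype_eq]

section SubspaceCount

variable {K V : Type*} [Field K] [AddCommGroup V] [Module K V] [FiniteDimensional K V]

theorem card_submodule_finrank_eq_card_dual {k : ℕ} (hk : k ≤ finrank K V) :
    Nat.card {W : Submodule K V // finrank K W = k} =
      Nat.card {U : Submodule K (Dual K V) // finrank K U = finrank K V - k} :=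
  Nat.card_congr
    { toFun W := ⟨W.1.dualAnnihilator, by
        have := Subspace.finrank_add_finrank_dualAnnihilator_eq W.1; have := W.2; omega⟩
      invFun U := ⟨U.1.dualCoannihilator, by
        have := Subspace.finrank_add_finrank_dualCoannihilator_eq U.1; have := U.2; omega⟩
      left_inv W := Subtype.ext Subspace.dualAnnihilator_dualCoannihilator_eq
      right_inv U := Subtype.ext Subspace.dualCoannihilator_dualAnnihilator_eq }

variable [Fintype K]

theorem card_linearIndependent_span_eq {r : ℕ} (W : Submodule K V) (hW : finrank K W = r) :
    Nat.card {f : Fin r → V // LinearIndependent K f ∧ span K (Set.range f) = W} =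
      ∏ i : Fin r, (Fintype.card K ^ r - Fintype.card K ^ (i : ℕ)) := by
  have : Finite W := Module.finite_of_finite K
  have h := card_linearIndependent (K := K) (V := W) hW.ge
  rw [hW] at h
  rw [← h, eq_comm]
  refine Nat.card_congr
    { toFun g := ⟨W.subtype ∘ g.1, (W.subtype.linearIndependent_iff W.ker_subtype).2 g.2, ?_⟩
      invFun f := ⟨fun i => ⟨f.1 i, f.2.2.le (subset_span ⟨i, rfl⟩)⟩,
        (W.subtype.linearIndependent_iff W.ker_subtype).1 f.2.1⟩
      left_inv _ := rfl
      right_inv _ := rfl }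
  refine eq_of_le_of_finrank_le (span_le.2 ?_) ?_
  · rintro _ ⟨i, rfl⟩
    exact (g.1 i).2
  · rw [finrank_span_eq_card ((W.subtype.linearIndependent_iff W.ker_subtype).2 g.2),
      Fintype.card_fin, hW]

theorem card_submodule_finrank_mul {r : ℕ} (hr : r ≤ finrank K V) :
    Nat.card {W : Submodule K V // finrank K W = r} *
        ∏ i : Fin r, (Fintype.card K ^ r - Fintype.card K ^ (i : ℕ)) =
      ∏ i : Fin r, (Fintype.card K ^ finrank K V - Fintype.card K ^ (i : ℕ)) := by
  have : Finite V := Module.finite_of_finite K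
  have : Finite (Submodule K V) := Finite.of_injective _ SetLike.coe_injective
  rw [← card_linearIndependent hr]
  refine (Nat.card_eq_card_mul_of_card_fiber
    (fun f : {f : Fin r → V // LinearIndependent K f} =>
      (⟨span K (Set.range f.1), by rw [finrank_span_eq_card f.2, Fintype.card_fin]⟩ :
        {W : Submodule K V // finrank K W = r})) fun W => ?_).symm
  rw [← card_linearIndependent_span_eq W.1 W.2,
    ← Nat.card_congr (Equiv.subtypeSubtypeEquivSubtypeInter _ _)]
  simp only [Subtype.ext_iff]

theorem card_submodule_finrank_eq_gaussBinom {r : ℕ} (hr : r ≤ finrank K V) :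
    Nat.card {W : Submodule K V // finrank K W = r} =
      gaussBinom (Fintype.card K) (finrank K V) r := by
  have hpos : 0 < ∏ i : Fin r, (Fintype.card K ^ r - Fintype.card K ^ (i : ℕ)) :=
    Finset.prod_pos fun i _ => Nat.sub_pos_of_lt (Nat.pow_lt_pow_right Fintype.one_lt_card i.2)
  rw [gaussBinom, ← Fin.prod_univ_eq_prod_range, ← Fin.prod_univ_eq_prod_range,
    ← card_submodule_finrank_mul hr, Nat.mul_div_cancel _ hpos]

theorem card_submodule_finrank_sub_eq_gaussBinom {k : ℕ} (hk : k ≤ finrank K V) :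
    Nat.card {W : Submodule K V // finrank K W = finrank K V - k} =
      gaussBinom (Fintype.card K) (finrank K V) k := by
  rw [card_submodule_finrank_eq_card_dual (Nat.sub_le _ _), Nat.sub_sub_self hk,
    card_submodule_finrank_eq_gaussBinom (by rwa [Subspace.dual_finrank_eq]),
    Subspace.dual_finrank_eq]

end SubspaceCount

section RankMetric

variable {K L : Type*} [Field K] [Field L] [Algebra K L] {n : ℕ}

-- `c ↦ φ_c|_W` in the notation of the header
variable (L) in
noncomputable def combinationOn (W : Submodule K (Fin n → K)) :
    (Fin n → L) →ₗ[L] (W →ₗ[K] L) :=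
  LinearMap.lcomp L L W.subtype ∘ₗ Fintype.bilinearCombination K L

theorem mem_ker_combinationOn {W : Submodule K (Fin n → K)} {c : Fin n → L} :
    c ∈ LinearMap.ker (combinationOn L W) ↔
      W ≤ LinearMap.ker (Fintype.linearCombination K c) := by
  rw [LinearMap.mem_ker]
  constructor
  · intro h x hx
    exact LinearMap.congr_fun h ⟨x, hx⟩
  · intro h
    ext x
    exact h x.2

variable (K) in
theorem vrank_add_finrank_ker (c : Fin n → L) :
    vrank K c + finrank K (LinearMap.ker (Fintype.linearCombination K c)) = n := by
  rw [vrank, ← Fintype.range_linearCombination, LinearMap.finrank_range_add_finrank_ker,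
    finrank_fin_fun]

variable (K) in
theorem vrank_zero : vrank K (0 : Fin n → L) = 0 := by
  rw [vrank, span_eq_bot.2 (by rintro _ ⟨i, rfl⟩; rfl), finrank_bot]

variable {C : Submodule L (Fin n → L)} {τ : ℕ}

theorem eq_zero_of_le_ker_of_lt_finrank (hdist : ∀ c ∈ C, c ≠ 0 → τ ≤ vrank K c)
    {c : Fin n → L} (hc : c ∈ C) {U : Submodule K (Fin n → K)}
    (hU : U ≤ LinearMap.ker (Fintype.linearCombination K c)) (hUτ : n - τ < finrank K U) :
    c = 0 := by
  by_contra hc0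
  have := hdist c hc hc0
  have := Submodule.finrank_mono hU
  have := vrank_add_finrank_ker K c
  omega

theorem finrank_inf_ker_combinationOn_le_one (hdist : ∀ c ∈ C, c ≠ 0 → τ ≤ vrank K c)
    (hτ : 0 < τ) (hτn : τ ≤ n) {W : Submodule K (Fin n → K)} (hW : finrank K W = n - τ) :
    finrank L ↥(C ⊓ LinearMap.ker (combinationOn L W)) ≤ 1 := by
  obtain ⟨e, he⟩ : ∃ e, e ∉ W := by
    by_contra! h
    rw [eq_top_iff'.2 h, finrank_top, finrank_fin_fun] at hW
    omega
  have he0 : e ≠ 0 := fun h => he (h ▸ W.zero_mem)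
  have hinj : Function.Injective
      ((combinationOn L (K ∙ e)).domRestrict (C ⊓ LinearMap.ker (combinationOn L W))) := by
    rw [← LinearMap.ker_eq_bot, LinearMap.ker_eq_bot']
    rintro ⟨c, hcC, hcW⟩ hce
    have hle : W ⊔ (K ∙ e) ≤ LinearMap.ker (Fintype.linearCombination K c) :=
      sup_le (mem_ker_combinationOn.1 hcW) (mem_ker_combinationOn.1 hce)
    have hc := eq_zero_of_le_ker_of_lt_finrank hdist hcC hle
      (by rw [Submodule.finrank_sup_span_singleton he]; omega)
    exact Subtype.ext hc
  calc finrank L ↥(C ⊓ LinearMap.ker (combinationOn L W))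
      ≤ finrank L ((K ∙ e) →ₗ[K] L) := LinearMap.finrank_le_finrank_of_injective hinj
    _ = 1 := by rw [finrank_linearMap_self, finrank_span_singleton he0]

theorem finrank_inf_ker_combinationOn_pos {W : Submodule K (Fin n → K)}
    (hW : finrank K W < finrank L C) :
    0 < finrank L ↥(C ⊓ LinearMap.ker (combinationOn L W)) := by
  have hker := LinearMap.ker_ne_bot_of_finrank_lt (f := combinationOn L W ∘ₗ C.subtype)
    (by rwa [finrank_linearMap_self])
  obtain ⟨c, hc, hc0⟩ := (Submodule.ne_bot_iff _).1 hker
  refine Submodule.one_le_finrank_iff.2 ((Submodule.ne_bot_iff _).2 ⟨c, ⟨c.2, hc⟩, ?_⟩)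
  exact fun h => hc0 (Subtype.ext h)

theorem vrank_eq_and_ker_eq_iff (hdist : ∀ c ∈ C, c ≠ 0 → τ ≤ vrank K c)
    (hτ : 0 < τ) (hτn : τ ≤ n) {W : Submodule K (Fin n → K)} (hW : finrank K W = n - τ)
    {c : Fin n → L} (hc : c ∈ C) :
    vrank K c = τ ∧ LinearMap.ker (Fintype.linearCombination K c) = W ↔
      c ∈ LinearMap.ker (combinationOn L W) ∧ c ≠ 0 := by
  have hrank := vrank_add_finrank_ker K c
  constructor
  · rintro ⟨hcτ, hker⟩
    refine ⟨mem_ker_combinationOn.2 hker.ge, ?_⟩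
    rintro rfl
    rw [vrank_zero] at hcτ
    omega
  · rintro ⟨hcW, hc0⟩
    have hle := mem_ker_combinationOn.1 hcW
    have := hdist c hc hc0
    have hker := (Submodule.eq_of_le_of_finrank_le hle (by omega)).symm
    refine ⟨?_, hker⟩
    rw [hker] at hrank
    omega

theorem card_vrank_eq_card_submodule_mul [Finite K] [Finite L]
    (hdist : ∀ c ∈ C, c ≠ 0 → τ ≤ vrank K c) (hτ : 0 < τ) (hτn : τ ≤ n)
    (hdim : finrank L C = n - τ + 1) :
    Nat.card {c : Fin n → L // c ∈ C ∧ vrank K c = τ} =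
      Nat.card {W : Submodule K (Fin n → K) // finrank K W = n - τ} * (Nat.card L - 1) := by
  have : Finite (Submodule K (Fin n → K)) := Finite.of_injective _ SetLike.coe_injective
  refine Nat.card_eq_card_mul_of_card_fiber
    (fun c => (⟨LinearMap.ker (Fintype.linearCombination K c.1), by
      have := vrank_add_finrank_ker K c.1; have := c.2.2; omega⟩ :
        {W : Submodule K (Fin n → K) // finrank K W = n - τ})) fun W => ?_
  have hone : finrank L ↥(C ⊓ LinearMap.ker (combinationOn L W.1)) = 1 :=
    le_antisymm (finrank_inf_ker_combinationOn_le_one hdist hτ hτn W.2)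
      (finrank_inf_ker_combinationOn_pos (by omega))
  let U := C ⊓ LinearMap.ker (combinationOn L W.1)
  calc Nat.card {c // _ = W}
      = Nat.card {c // c ∈ U ∧ c ≠ 0} := by
        refine Nat.card_congr ((Equiv.subtypeEquivRight fun c => Subtype.ext_iff).trans
          ((Equiv.subtypeSubtypeEquivSubtypeInter (fun c => c ∈ C ∧ vrank K c = τ)
            (fun c => LinearMap.ker (Fintype.linearCombination K c) = W.1)).trans
          (Equiv.subtypeEquivRight fun c => ?_)))
        rw [Submodule.mem_inf, and_assoc, and_assoc]
        exact and_congr_right fun hc => vrank_eq_and_ker_eq_iff hdist hτ hτn W.2 hc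
    _ = Nat.card U - 1 := U.card_mem_and_ne_zero
    _ = Nat.card L - 1 := by
        rw [Nat.card_congr (LinearEquiv.ofFinrankEq U L (by rw [hone, finrank_self])).toEquiv]

end RankMetric

/-- Weight distribution consequence for MRD codes: if `C` is a linear MRD code of length
`n ≤ m` over `F_{q^m}` with minimum rank distance `τ` (i.e. dimension `n - τ + 1`), then the
number of codewords of `C` of rank exactly `τ` equals `[n choose τ]_q · (q^m - 1)`. -/
theorem MRD_weight_distribution
    {Fq L : Type*} [Field Fq] [Fintype Fq] [Field L] [Algebra Fq L]
    {q m n τ : ℕ} (hq : q = Fintype.card Fq) (hm : Module.finrank Fq L = m)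
    (hτ1 : 1 ≤ τ) (hτn : τ ≤ n) (hnm : n ≤ m)
    (C : Submodule L (Fin n → L))
    (hdim : Module.finrank L ↥C = n - τ + 1)
    (hdist : ∀ c ∈ C, c ≠ 0 → τ ≤ vrank Fq c) :
    Nat.card {c : Fin n → L // c ∈ C ∧ vrank Fq c = τ} =
      gaussBinom q n τ * (q ^ m - 1) := by
  have : FiniteDimensional Fq L := .of_finrank_pos (by omega)
  have : Finite L := Module.finite_of_finite Fq
  have : Fintype L := Fintype.ofFinite L
  have hcardL : Nat.card L = q ^ m := by
    rw [Nat.card_eq_fintype_card, card_eq_pow_finrank (K := Fq), hq, hm]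
  have hsub := card_submodule_finrank_sub_eq_gaussBinom (K := Fq) (V := Fin n → Fq)
    (k := τ) (by rwa [finrank_fin_fun])
  rw [finrank_fin_fun] at hsub
  rw [card_vrank_eq_card_submodule_mul hdist hτ1 hτn hdim, hsub, hcardL, hq]
end
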